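/- Strong contraction: for all finite sets Γ, Δ of formulas, Δ is a semantic consequence of Γ in every strict finitistic model if and only if Δ is a semantic consequence of Γ in every two-node strict finitistic model (a strict finitistic model with exactly two nodes r < k). -/

import Mathlib

/-- Propositional formulas over a countably infinite set of variables (indexed by ℕ). -/
inductive Fm : Type
  | bot : Fm
  | var : ℕ → Fm
  | and : Fm → Fm → Fm
  | or : Fm → Fm → Fm
  | imp : Fm → Fm → Fm

/-- ¬A abbreviates A → ⊥. -/
def Fm.neg (A : Fm) : Fm := Fm.imp A Fm.bot

/-- ¬¬A. -/
def Fm.dneg (A : Fm) : Fm := (Fm.imp A Fm.bot).imp Fm.bot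

/-- A strict finitistic model: a rooted tree (a partial order with minimum whose
sets of predecessors are linearly ordered), finitely branching, all of whose
branches (chains) are of at most countable length, with an upward-closed valuation
satisfying the finite verification condition and the atomic prevalence condition. -/
structure SFModel where
  K : Type
  le : K → K → Prop
  le_refl : ∀ k, le k k
  le_antisymm : ∀ k l, le k l → le l k → k = l
  le_trans : ∀ k l m, le k l → le l m → le k m
  root : K
  root_le : ∀ k, le root k
  pred_linear : ∀ k l m, le l k → le m k → le l m ∨ le m l
  finitely_branching :
    ∀ k, {l | le k l ∧ k ≠ l ∧ ∀ m, le k m → le m l → m = k ∨ m = l}.Finite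
  branches_countable :
    ∀ C : Set K, (∀ x ∈ C, ∀ y ∈ C, le x y ∨ le y x) → C.Countable
  val : ℕ → Set K
  val_up : ∀ p k l, le k l → k ∈ val p → l ∈ val p
  fin_verif : ∀ k, {p | k ∈ val p}.Finite
  atomic_prev : ∀ p, (∃ k, k ∈ val p) → ∀ l, ∃ l', le l l' ∧ l' ∈ val p

/-- Strict finitistic forcing at a node of a strict finitistic model. -/
def Force (W : SFModel) : W.K → Fm → Prop
  | _, Fm.bot => False
  | k, Fm.var p => k ∈ W.val p
  | k, Fm.and A B => Force W k A ∧ Force W k B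
  | k, Fm.or A B => Force W k A ∨ Force W k B
  | k, Fm.imp A B =>
      ∀ k', W.le k k' → Force W k' A → ∃ k'', W.le k' k'' ∧ Force W k'' B

/-- A is valid in W: every node forces A. -/
def Valid (W : SFModel) (A : Fm) : Prop := ∀ k, Force W k A

/-- A is assertible in W: some node forces A. -/
def Assertible (W : SFModel) (A : Fm) : Prop := ∃ k, Force W k A

/-- A is prevalent in W: above every node some node forces A. -/
def Prevalent (W : SFModel) (A : Fm) : Prop := ∀ k, ∃ k', W.le k k' ∧ Force W k' A

/-- Δ is a semantic consequence of Γ in W. -/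
def Conseq (W : SFModel) (Γ Δ : Finset Fm) : Prop :=
  ∀ k, (∀ A ∈ Γ, Force W k A) → ∃ B ∈ Δ, Force W k B

deriving instance DecidableEq for Fm

lemma force_mono (W : SFModel) (A : Fm) :
    ∀ k l, W.le k l → Force W k A → Force W l A := by
  induction A with
  | bot => intro k l _ h; exact h
  | var p => intro k l h hk; exact W.val_up p k l h hk
  | and A B ihA ihB =>
      rintro k l h ⟨ha, hb⟩; exact ⟨ihA k l h ha, ihB k l h hb⟩
  | or A B ihA ihB =>
      rintro k l h (ha | hb)
      · exact Or.inl (ihA k l h ha)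
      · exact Or.inr (ihB k l h hb)
  | imp A B ihA ihB =>
      intro k l h hk k' hk' ha
      exact hk k' (W.le_trans _ _ _ h hk') ha

lemma force_prev (W : SFModel) (A : Fm) :
    (∃ k, Force W k A) → ∀ l, ∃ l', W.le l l' ∧ Force W l' A := by
  induction A with
  | bot => rintro ⟨k, hk⟩; exact absurd hk (fun h => h)
  | var p => exact fun h => W.atomic_prev p h
  | and A B ihA ihB =>
      rintro ⟨k, ha, hb⟩ l
      obtain ⟨l1, hl1, ha1⟩ := ihA ⟨k, ha⟩ l
      obtain ⟨l2, hl2, hb2⟩ := ihB ⟨k, hb⟩ l1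
      exact ⟨l2, W.le_trans _ _ _ hl1 hl2, force_mono W A l1 l2 hl2 ha1, hb2⟩
  | or A B ihA ihB =>
      rintro ⟨k, ha | hb⟩ l
      · obtain ⟨l', hl', h'⟩ := ihA ⟨k, ha⟩ l; exact ⟨l', hl', Or.inl h'⟩
      · obtain ⟨l', hl', h'⟩ := ihB ⟨k, hb⟩ l; exact ⟨l', hl', Or.inr h'⟩
  | imp A B ihA ihB =>
      rintro ⟨k, hk⟩ l
      refine ⟨l, W.le_refl l, ?_⟩
      intro l' _ ha
      obtain ⟨k', hkk', ha'⟩ := ihA ⟨l', ha⟩ k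
      obtain ⟨k'', _, hb⟩ := hk k' hkk' ha'
      exact ihB ⟨k'', hb⟩ l'

lemma force_imp_iff (W : SFModel) (k : W.K) (A B : Fm) :
    Force W k (Fm.imp A B) ↔ ((∃ l, Force W l A) → ∃ l, Force W l B) := by
  constructor
  · rintro h ⟨l, hl⟩
    obtain ⟨k', hk', ha⟩ := force_prev W A ⟨l, hl⟩ k
    obtain ⟨k'', _, hb⟩ := h k' hk' ha
    exact ⟨k'', hb⟩
  · intro h k' _ ha
    obtain ⟨l, hb⟩ := h ⟨k', ha⟩
    exact force_prev W B ⟨l, hb⟩ k'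

/-- Variables occurring in a formula. -/
def Fm.vars : Fm → Finset ℕ
  | Fm.bot => ∅
  | Fm.var p => {p}
  | Fm.and A B => A.vars ∪ B.vars
  | Fm.or A B => A.vars ∪ B.vars
  | Fm.imp A B => A.vars ∪ B.vars

/-- The two-node model extracted from a node of a model, relative to a finite set
of variables. -/
def twoModel (W : SFModel) (k : W.K) (S : Finset ℕ) : SFModel where
  K := Bool
  le a b := a = b ∨ (a = false ∧ b = true)
  le_refl := by decide
  le_antisymm := by decide
  le_trans := by decide
  root := false
  root_le := by decide
  pred_linear := by decide
  finitely_branching := fun _ => Set.toFinite _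
  branches_countable := fun C _ => C.to_countable
  val p := {x | p ∈ S ∧ ((x = true ∧ ∃ l, l ∈ W.val p) ∨ k ∈ W.val p)}
  val_up := by
    rintro p a b (rfl | ⟨rfl, rfl⟩) ha
    · exact ha
    · obtain ⟨hp, hx⟩ := ha
      refine ⟨hp, Or.inr ?_⟩
      rcases hx with ⟨h, _⟩ | h
      · exact absurd h (by decide)
      · exact h
  fin_verif := fun x => Set.Finite.subset S.finite_toSet (fun p hp => hp.1)
  atomic_prev := by
    rintro p ⟨x, hx⟩ l
    refine ⟨true, ?_, ?_⟩
    · rcases l with _ | _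
      · exact Or.inr ⟨rfl, rfl⟩
      · exact Or.inl rfl
    · rcases hx with ⟨hp, ⟨_, hs⟩ | hk⟩
      · exact ⟨hp, Or.inl ⟨rfl, hs⟩⟩
      · exact ⟨hp, Or.inr hk⟩

lemma two_force (W : SFModel) (k : W.K) (S : Finset ℕ) (A : Fm) (hS : A.vars ⊆ S) :
    (Force (twoModel W k S) false A ↔ Force W k A) ∧
    (Force (twoModel W k S) true A ↔ ∃ l, Force W l A) := by
  have hall : ∀ x : Bool, (twoModel W k S).le x true := by
    intro x
    cases x
    · exact Or.inr ⟨rfl, rfl⟩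
    · exact Or.inl rfl
  have sat2 : ∀ C : Fm, (∃ x, Force (twoModel W k S) x C) ↔ Force (twoModel W k S) true C := by
    intro C
    constructor
    · rintro ⟨x, hx⟩; exact force_mono (twoModel W k S) C x true (hall x) hx
    · exact fun h => ⟨true, h⟩
  induction A with
  | bot => simp [Force]
  | var p =>
      have hp : p ∈ S := hS (by simp [Fm.vars])
      constructor
      · show (false : Bool) ∈ (twoModel W k S).val p ↔ k ∈ W.val p
        show (p ∈ S ∧ ((false = true ∧ ∃ l, l ∈ W.val p) ∨ k ∈ W.val p)) ↔ k ∈ W.val p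
        simp [hp]
      · show (p ∈ S ∧ ((true = true ∧ ∃ l, l ∈ W.val p) ∨ k ∈ W.val p)) ↔ ∃ l, l ∈ W.val p
        constructor
        · rintro ⟨_, ⟨_, hs⟩ | hk⟩
          · exact hs
          · exact ⟨k, hk⟩
        · exact fun hs => ⟨hp, Or.inl ⟨rfl, hs⟩⟩
  | and A B ihA ihB =>
      have hA := ihA (fun x hx => hS (Finset.mem_union_left _ hx))
      have hB := ihB (fun x hx => hS (Finset.mem_union_right _ hx))
      constructor
      · exact and_congr hA.1 hB.1
      · show (Force (twoModel W k S) true A ∧ Force (twoModel W k S) true B) ↔ _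
        constructor
        · rintro ⟨ha, hb⟩
          obtain ⟨la, hla⟩ := hA.2.mp ha
          obtain ⟨lb, hlb⟩ := hB.2.mp hb
          obtain ⟨m, hm, ha'⟩ := force_prev W A ⟨la, hla⟩ lb
          exact ⟨m, ha', force_mono W B lb m hm hlb⟩
        · rintro ⟨l, ha, hb⟩
          exact ⟨hA.2.mpr ⟨l, ha⟩, hB.2.mpr ⟨l, hb⟩⟩
  | or A B ihA ihB =>
      have hA := ihA (fun x hx => hS (Finset.mem_union_left _ hx))
      have hB := ihB (fun x hx => hS (Finset.mem_union_right _ hx))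
      constructor
      · exact or_congr hA.1 hB.1
      · show (Force (twoModel W k S) true A ∨ Force (twoModel W k S) true B) ↔ _
        constructor
        · rintro (ha | hb)
          · obtain ⟨l, hl⟩ := hA.2.mp ha; exact ⟨l, Or.inl hl⟩
          · obtain ⟨l, hl⟩ := hB.2.mp hb; exact ⟨l, Or.inr hl⟩
        · rintro ⟨l, ha | hb⟩
          · exact Or.inl (hA.2.mpr ⟨l, ha⟩)
          · exact Or.inr (hB.2.mpr ⟨l, hb⟩)
  | imp A B ihA ihB =>
      have hA := ihA (fun x hx => hS (Finset.mem_union_left _ hx))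
      have hB := ihB (fun x hx => hS (Finset.mem_union_right _ hx))
      have key : ∀ x : Bool, Force (twoModel W k S) x (Fm.imp A B) ↔
          ((∃ l, Force W l A) → ∃ l, Force W l B) := by
        intro x
        exact (force_imp_iff (twoModel W k S) x A B).trans (by rw [sat2, sat2, hA.2, hB.2])
      constructor
      · rw [key, force_imp_iff]
      · rw [key]
        constructor
        · intro h
          exact ⟨W.root, (force_imp_iff W W.root A B).mpr h⟩
        · rintro ⟨l, hl⟩
          exact (force_imp_iff W l A B).mp hl

/-- strong contraction: semantic consequence in all strict
finitistic models coincides with semantic consequence in all two-node strict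
finitistic models. -/
theorem strong_contraction (Γ Δ : Finset Fm) :
    (∀ W : SFModel, Conseq W Γ Δ) ↔
    (∀ W : SFModel,
      (∃ r k : W.K, r ≠ k ∧ W.le r k ∧ ∀ x : W.K, x = r ∨ x = k) →
      Conseq W Γ Δ) := by
  constructor
  · intro h W _; exact h W
  · intro h W
    intro k hΓ
    set S : Finset ℕ := (Γ ∪ Δ).sup Fm.vars with hSdef
    have htwo : ∃ r k2 : (twoModel W k S).K, r ≠ k2 ∧ (twoModel W k S).le r k2 ∧
        ∀ x : (twoModel W k S).K, x = r ∨ x = k2 :=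
      ⟨false, true, Bool.false_ne_true, Or.inr ⟨rfl, rfl⟩, fun x => x.dichotomy⟩
    have hc := h (twoModel W k S) htwo
    have hsub : ∀ A ∈ Γ ∪ Δ, A.vars ⊆ S := fun A hA => Finset.le_sup hA
    obtain ⟨B, hB, hfB⟩ := hc false (fun A hAΓ =>
      (two_force W k S A (hsub A (Finset.mem_union_left _ hAΓ))).1.mpr (hΓ A hAΓ))
    exact ⟨B, hB, (two_force W k S B (hsub B (Finset.mem_union_right _ hB))).1.mp hfB⟩
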